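/- Let ν>2, σ>0 and μ, y*∈ℝ. Let g be the non-standardized Student-t density with ν degrees of freedom, location μ, and scale σ: g(t) = Γ((ν+1)/2)/(σ√(νπ)Γ(ν/2)) · (1+(t−μ)²/(νσ²))^{−(ν+1)/2}. Set m = √(ν/(ν−2)). Then the lower partial mean satisfies ∫_{−∞}^{y*} (μ − t) · g(t) dt = m·σ·φ_{ν−2}((y*−μ)/(mσ)), where φ_ν denotes the standard Student-t density with ν degrees of freedom. -/

import Mathlib

open MeasureTheory

/-- The standard Student-t density with `ν` degrees of freedom. -/
noncomputable def tpdf (ν x : ℝ) : ℝ :=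
  Real.Gamma ((ν + 1) / 2) / (Real.sqrt (ν * Real.pi) * Real.Gamma (ν / 2)) *
    (1 + x ^ 2 / ν) ^ (-((ν + 1) / 2))

/-- The non-standardized Student-t density with `ν` degrees of freedom,
location `μ` and scale `σ`. -/
noncomputable def studentDensity (ν μ σ t : ℝ) : ℝ :=
  Real.Gamma ((ν + 1) / 2) / (σ * Real.sqrt (ν * Real.pi) * Real.Gamma (ν / 2)) *
    (1 + (t - μ) ^ 2 / (ν * σ ^ 2)) ^ (-((ν + 1) / 2))

/-! With `m = √(ν/(ν−2))`, the function `x ↦ m φ_{ν−2}(x/m)` is a constant multiple of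
`(1 + x²/ν)^{−(ν−1)/2}`, and differentiating shows that its derivative is `−x φ_ν(x)`; the
constants agree by `Γ(s+1) = s Γ(s)` at `s = (ν−1)/2` and `s = (ν−2)/2`. Substituting
`x = (t−μ)/σ`, the integrand `(μ − t) g(t)` is the derivative of `σ m φ_{ν−2}((t−μ)/(mσ))`,
which vanishes at `−∞`. The integrand is nonnegative for `t ≤ μ`, which makes it integrable on
`(−∞, y*]`, and the fundamental theorem of calculus gives the formula. -/

open Filter Set Topology

theorem integrableOn_Iic_deriv_of_nonneg' {g g' : ℝ → ℝ} {a l : ℝ}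
    (hderiv : ∀ x ∈ Iic a, HasDerivAt g (g' x) x) (g'pos : ∀ x ∈ Iio a, 0 ≤ g' x)
    (hg : Tendsto g atBot (𝓝 l)) : IntegrableOn g' (Iic a) := by
  have hreflect : IntegrableOn (fun x => -g' (-x)) (Ioi (-a)) := by
    refine integrableOn_Ioi_deriv_of_nonpos' (g := fun x => g (-x)) (fun x hx => ?_)
      (fun x hx => neg_nonpos.mpr (g'pos (-x) (neg_lt.mp hx.out))) (hg.comp tendsto_neg_atTop_atBot)
    simpa [Function.comp_def] using (hderiv (-x) (neg_le.mp hx.out)).comp x (hasDerivAt_neg x)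
  rw [integrableOn_Iic_iff_integrableOn_Iio]
  simpa using hreflect.neg.comp_neg_Iio

theorem integral_Iic_of_hasDerivAt_of_eventually_nonneg {g g' : ℝ → ℝ} {a l : ℝ}
    (hderiv : ∀ x, HasDerivAt g (g' x) x) (hcont : Continuous g')
    (hpos : ∀ᶠ x in atBot, 0 ≤ g' x) (hg : Tendsto g atBot (𝓝 l)) :
    ∫ x in Iic a, g' x = g a - l := by
  obtain ⟨b, hb⟩ := eventually_atBot.mp hpos
  have hleft : IntegrableOn g' (Iic (min a b)) :=
    integrableOn_Iic_deriv_of_nonneg' (fun x _ => hderiv x)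
      (fun x hx => hb x (hx.out.le.trans (min_le_right a b))) hg
  have hint : IntegrableOn g' (Iic a) :=
    (hleft.union hcont.integrableOn_Icc).mono_set Iic_subset_Iic_union_Icc
  exact integral_Iic_of_hasDerivAt_of_tendsto' (fun x _ => hderiv x) hint hg

noncomputable def studentNormConst (ν : ℝ) : ℝ :=
  Real.Gamma ((ν + 1) / 2) / (Real.sqrt (ν * Real.pi) * Real.Gamma (ν / 2))

theorem tpdf_eq_studentNormConst_mul (ν x : ℝ) :
    tpdf ν x = studentNormConst ν * (1 + x ^ 2 / ν) ^ (-((ν + 1) / 2)) :=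
  rfl

theorem studentNormConst_sub_two {ν : ℝ} (hν : 2 < ν) :
    ν / (ν - 1) * studentNormConst ν = √(ν / (ν - 2)) * studentNormConst (ν - 2) := by
  have hG₁ : Real.Gamma ((ν + 1) / 2) = (ν - 1) / 2 * Real.Gamma ((ν - 1) / 2) := by
    rw [← Real.Gamma_add_one (by linarith)]; ring_nf
  have hG₂ : Real.Gamma (ν / 2) = (ν - 2) / 2 * Real.Gamma ((ν - 2) / 2) := by
    rw [← Real.Gamma_add_one (by linarith)]; ring_nf
  have := Real.Gamma_pos_of_pos (show 0 < (ν - 1) / 2 by linarith)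
  have := Real.Gamma_pos_of_pos (show 0 < (ν - 2) / 2 by linarith)
  have hsν := Real.sq_sqrt (show 0 ≤ ν by linarith)
  have hsν₂ := Real.sq_sqrt (show 0 ≤ ν - 2 by linarith)
  have := Real.sqrt_pos.mpr (show 0 < ν - 2 by linarith)
  have := Real.sqrt_pos.mpr (show 0 < ν by linarith)
  have : ν - 1 ≠ 0 := by linarith
  have : ν - 2 ≠ 0 := by linarith
  unfold studentNormConst
  rw [show (ν - 2 + 1) / 2 = (ν - 1) / 2 by ring, hG₁, hG₂, Real.sqrt_div (by linarith),
    Real.sqrt_mul (by linarith), Real.sqrt_mul (by linarith)]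
  field_simp
  rw [hsν, hsν₂]

theorem tpdf_nonneg {ν : ℝ} (hν : 0 ≤ ν) (x : ℝ) : 0 ≤ tpdf ν x := by
  have := Real.Gamma_nonneg_of_nonneg (show 0 ≤ (ν + 1) / 2 by linarith)
  have := Real.Gamma_nonneg_of_nonneg (show 0 ≤ ν / 2 by linarith)
  unfold tpdf
  positivity

theorem continuous_tpdf {ν : ℝ} (hν : 0 < ν) : Continuous (tpdf ν) := by
  unfold tpdf
  exact continuous_const.mul (Continuous.rpow_const (by fun_prop) fun x => Or.inl (by positivity))

theorem tendsto_tpdf_atBot {ν : ℝ} (hν : 0 < ν) : Tendsto (tpdf ν) atBot (𝓝 0) := by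
  have hsq : Tendsto (fun x : ℝ => x ^ 2) atBot atTop := by
    simpa [sq] using tendsto_id.atBot_mul_atBot₀ tendsto_id
  have hbase : Tendsto (fun x : ℝ => 1 + x ^ 2 / ν) atBot atTop :=
    tendsto_atTop_add_const_left _ _ (hsq.atTop_div_const hν)
  have h := ((tendsto_rpow_neg_atTop (y := (ν + 1) / 2) (by linarith)).comp hbase).const_mul
    (studentNormConst ν)
  rwa [mul_zero] at h

theorem studentDensity_eq_tpdf (ν μ σ t : ℝ) :
    studentDensity ν μ σ t = tpdf ν ((t - μ) / σ) / σ := by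
  unfold studentDensity tpdf
  ring_nf

theorem hasDerivAt_one_add_sq_div_rpow {ν : ℝ} (hν : 0 < ν) (p x : ℝ) :
    HasDerivAt (fun x => (1 + x ^ 2 / ν) ^ p) (2 * x / ν * p * (1 + x ^ 2 / ν) ^ (p - 1)) x := by
  have hbase : HasDerivAt (fun x : ℝ => 1 + x ^ 2 / ν) (2 * x / ν) x := by
    simpa using ((hasDerivAt_pow 2 x).div_const ν).const_add 1
  exact hbase.rpow_const (Or.inl (by positivity))

theorem sqrt_mul_tpdf_sub_two {ν : ℝ} (hν : 2 < ν) (x : ℝ) :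
    √(ν / (ν - 2)) * tpdf (ν - 2) (x / √(ν / (ν - 2))) =
      ν / (ν - 1) * studentNormConst ν * (1 + x ^ 2 / ν) ^ (-((ν - 1) / 2)) := by
  have hm := Real.sq_sqrt (show 0 ≤ ν / (ν - 2) by positivity)
  have : ν - 2 ≠ 0 := by linarith
  rw [tpdf_eq_studentNormConst_mul, studentNormConst_sub_two hν, div_pow, hm,
    show ν - 2 + 1 = ν - 1 by ring]
  field_simp

theorem hasDerivAt_sqrt_mul_tpdf_sub_two {ν : ℝ} (hν : 2 < ν) (x : ℝ) :
    HasDerivAt (fun x => √(ν / (ν - 2)) * tpdf (ν - 2) (x / √(ν / (ν - 2)))) (-x * tpdf ν x) x := by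
  simp_rw [sqrt_mul_tpdf_sub_two hν]
  refine ((hasDerivAt_one_add_sq_div_rpow (by linarith) _ x).const_mul _).congr_deriv ?_
  have : ν - 1 ≠ 0 := by linarith
  have : ν ≠ 0 := by linarith
  rw [tpdf_eq_studentNormConst_mul, show -((ν - 1) / 2) - 1 = -((ν + 1) / 2) by ring]
  field_simp

/-- Lower partial mean of a non-standardized Student-t density with
`ν > 2` degrees of freedom, location `μ` and scale `σ > 0`: with `m = √(ν/(ν−2))`,
`∫_{−∞}^{y*} (μ − t) g(t) dt = m·σ·φ_{ν−2}((y*−μ)/(mσ))`. -/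
theorem student_lower_partial_mean (ν σ μ ystar : ℝ) (hν : 2 < ν) (hσ : 0 < σ)
    (m : ℝ) (hm : m = Real.sqrt (ν / (ν - 2))) :
    (∫ t in Set.Iic ystar, (μ - t) * studentDensity ν μ σ t) =
      m * σ * tpdf (ν - 2) ((ystar - μ) / (m * σ)) := by
  have hm₀ : 0 < m := hm ▸ Real.sqrt_pos.mpr (div_pos (by linarith) (by linarith))
  set F : ℝ → ℝ := fun t => σ * (m * tpdf (ν - 2) ((t - μ) / σ / m))
  have hF : ∀ t, HasDerivAt F ((μ - t) * studentDensity ν μ σ t) t := by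
    intro t
    have hz : HasDerivAt (fun t => (t - μ) / σ) σ⁻¹ t := by
      simpa using ((hasDerivAt_id t).sub_const μ).div_const σ
    refine (((hm ▸ hasDerivAt_sqrt_mul_tpdf_sub_two hν _).comp t hz).const_mul σ).congr_deriv ?_
    rw [studentDensity_eq_tpdf]
    field_simp
    ring
  have hcont : Continuous fun t => (μ - t) * studentDensity ν μ σ t := by
    simp_rw [studentDensity_eq_tpdf]
    have := continuous_tpdf (show 0 < ν by linarith)
    fun_prop
  have hpos : ∀ᶠ t in atBot, 0 ≤ (μ - t) * studentDensity ν μ σ t := by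
    refine eventually_atBot.mpr ⟨μ, fun t ht => mul_nonneg (by linarith) ?_⟩
    rw [studentDensity_eq_tpdf]
    exact div_nonneg (tpdf_nonneg (by linarith) _) hσ.le
  have hlim : Tendsto F atBot (𝓝 0) := by
    have hz : Tendsto (fun t => (t - μ) / σ / m) atBot atBot :=
      ((tendsto_atBot_add_const_right _ _ tendsto_id).atBot_div_const hσ).atBot_div_const hm₀
    simpa [F] using (((tendsto_tpdf_atBot (by linarith)).comp hz).const_mul m).const_mul σ
  rw [integral_Iic_of_hasDerivAt_of_eventually_nonneg hF hcont hpos hlim, sub_zero]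
  simp only [F, div_div, mul_comm σ m]
  ring
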